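/- Every non-injective simple module over a commutative ring is singular. -/

import Mathlib

universe u

open LinearMap MulOpposite

/-! Character module -/

/-- The character group `M⁺ = Hom_ℤ(M, ℚ/ℤ)`. -/
abbrev CharMod (M : Type u) [AddCommGroup M] : Type u := M →+ AddCircle (1 : ℚ)

/-- If `M` is a left `S`-module, then `M⁺` is a right `S`-module via `(f • r) m = f (r • m)`. -/
instance CharMod.moduleRight (S : Type u) [Ring S] (M : Type u) [AddCommGroup M]
    [Module S M] : Module Sᵐᵒᵖ (CharMod M) where
  smul r f := f.comp (DistribMulAction.toAddMonoidHom M (unop r))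
  one_smul f := by
    apply AddMonoidHom.ext; intro m
    show f ((unop (1 : Sᵐᵒᵖ)) • m) = f m
    simp
  mul_smul r s f := by
    apply AddMonoidHom.ext; intro m
    show f ((unop (r * s)) • m) = f ((unop s) • ((unop r) • m))
    simp [mul_smul]
  smul_zero r := by apply AddMonoidHom.ext; intro m; rfl
  smul_add r f g := by apply AddMonoidHom.ext; intro m; rfl
  add_smul r s f := by
    apply AddMonoidHom.ext; intro m
    show f ((unop (r + s)) • m) = f ((unop r) • m) + f ((unop s) • m)
    rw [unop_add, add_smul, map_add]
  zero_smul f := by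
    apply AddMonoidHom.ext; intro m
    show f ((unop (0 : Sᵐᵒᵖ)) • m) = 0
    simp

/-- If `M` is a right `S`-module, then `M⁺` is a left `S`-module via `(r • f) m = f (m • r)`. -/
instance CharMod.moduleLeft (S : Type u) [Ring S] (M : Type u) [AddCommGroup M]
    [Module Sᵐᵒᵖ M] : Module S (CharMod M) where
  smul r f := f.comp (DistribMulAction.toAddMonoidHom M (op r))
  one_smul f := by
    apply AddMonoidHom.ext; intro m
    show f ((op (1 : S)) • m) = f m
    simp
  mul_smul r s f := by
    apply AddMonoidHom.ext; intro m
    show f ((op (r * s)) • m) = f ((op s) • ((op r) • m))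
    rw [← mul_smul, ← op_mul]
  smul_zero r := by apply AddMonoidHom.ext; intro m; rfl
  smul_add r f g := by apply AddMonoidHom.ext; intro m; rfl
  add_smul r s f := by
    apply AddMonoidHom.ext; intro m
    show f ((op (r + s)) • m) = f ((op r) • m) + f ((op s) • m)
    rw [op_add, add_smul, map_add]
  zero_smul f := by
    apply AddMonoidHom.ext; intro m
    show f ((op (0 : S)) • m) = 0
    simp

/-! Tensor product of a right module and a left module over a (possibly noncommutative) ring -/

section Tensor

variable (S : Type u) [Ring S]

/-- The bilinearity relations defining `M ⊗_S N` as a quotient of `M ⊗_ℤ N`. -/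
def tensorRel (M N : Type u) [AddCommGroup M] [Module Sᵐᵒᵖ M] [AddCommGroup N] [Module S N] :
    Submodule ℤ (TensorProduct ℤ M N) :=
  Submodule.span ℤ {x | ∃ (m : M) (r : S) (n : N),
    x = (op r • m) ⊗ₜ[ℤ] n - m ⊗ₜ[ℤ] (r • n)}

/-- `M ⊗_S N` for a right `S`-module `M` and a left `S`-module `N`. -/
def RTensor (M N : Type u) [AddCommGroup M] [Module Sᵐᵒᵖ M] [AddCommGroup N] [Module S N] :
    Type u := TensorProduct ℤ M N ⧸ tensorRel S M N

noncomputable instance (M N : Type u) [AddCommGroup M] [Module Sᵐᵒᵖ M] [AddCommGroup N] [Module S N] :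
    AddCommGroup (RTensor S M N) :=
  inferInstanceAs (AddCommGroup (TensorProduct ℤ M N ⧸ tensorRel S M N))

/-- Functoriality of `M ⊗_S -` in the left-module variable. -/
noncomputable def rTensorMap (M : Type u) [AddCommGroup M] [Module Sᵐᵒᵖ M] {N B : Type u}
    [AddCommGroup N] [Module S N] [AddCommGroup B] [Module S B] (g : N →ₗ[S] B) :
    RTensor S M N →ₗ[ℤ] RTensor S M B :=
  Submodule.mapQ _ _ (TensorProduct.map LinearMap.id g.toAddMonoidHom.toIntLinearMap)
    (by
      rw [tensorRel, Submodule.span_le]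
      rintro x ⟨m, r, n, rfl⟩
      have hx : (op r • m) ⊗ₜ[ℤ] g n - m ⊗ₜ[ℤ] g (r • n) ∈ tensorRel S M B := by
        rw [map_smul]
        exact Submodule.subset_span ⟨m, r, g n, rfl⟩
      exact hx)

/-- Functoriality of `- ⊗_S N` in the right-module variable. -/
noncomputable def lTensorMap {M B : Type u} [AddCommGroup M] [Module Sᵐᵒᵖ M] [AddCommGroup B]
    [Module Sᵐᵒᵖ B] (h : M →ₗ[Sᵐᵒᵖ] B) (N : Type u) [AddCommGroup N] [Module S N] :
    RTensor S M N →ₗ[ℤ] RTensor S B N :=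
  Submodule.mapQ _ _ (TensorProduct.map h.toAddMonoidHom.toIntLinearMap LinearMap.id)
    (by
      rw [tensorRel, Submodule.span_le]
      rintro x ⟨m, r, n, rfl⟩
      have hx : h (op r • m) ⊗ₜ[ℤ] n - h m ⊗ₜ[ℤ] (r • n) ∈ tensorRel S B N := by
        rw [map_smul]
        exact Submodule.subset_span ⟨h m, r, n, rfl⟩
      change TensorProduct.map h.toAddMonoidHom.toIntLinearMap LinearMap.id
        ((op r • m) ⊗ₜ[ℤ] n - m ⊗ₜ[ℤ] (r • n)) ∈ tensorRel S B N
      rw [map_sub, TensorProduct.map_tmul, TensorProduct.map_tmul]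
      exact hx)

end Tensor

/-! Basic relative homological notions -/

section Defs

variable (S : Type u) [Ring S]

/-- `M` is `N`-subinjective: every map `N → M` extends along every embedding of `N`. -/
def Subinjective (N M : Type u) [AddCommGroup N] [Module S N] [AddCommGroup M]
    [Module S M] : Prop :=
  ∀ (K : Type u) [AddCommGroup K] [Module S K] (i : N →ₗ[S] K), Function.Injective i →
    ∀ f : N →ₗ[S] M, ∃ h : K →ₗ[S] M, h ∘ₗ i = f

/-- `M` is an injective module. -/
def InjMod (M : Type u) [AddCommGroup M] [Module S M] : Prop :=
  ∀ (N : Type u) [AddCommGroup N] [Module S N], Subinjective S N M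

/-- `M` is `N`-subprojective. -/
def Subprojective (M N : Type u) [AddCommGroup M] [Module S M] [AddCommGroup N]
    [Module S N] : Prop :=
  ∀ (B : Type u) [AddCommGroup B] [Module S B] (g : B →ₗ[S] N), Function.Surjective g →
    ∀ f : M →ₗ[S] N, ∃ h : M →ₗ[S] B, g ∘ₗ h = f

/-- A monomorphism of left `S`-modules is pure if it stays injective after
tensoring with any right `S`-module. -/
def IsPureMono {A B : Type u} [AddCommGroup A] [Module S A] [AddCommGroup B] [Module S B]
    (i : A →ₗ[S] B) : Prop :=
  Function.Injective i ∧
    ∀ (M : Type u) [AddCommGroup M] [Module Sᵐᵒᵖ M], Function.Injective (rTensorMap S M i)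

/-- `N` is absolutely pure (fp-injective): every embedding of `N` is pure. -/
def AbsPure (N : Type u) [AddCommGroup N] [Module S N] : Prop :=
  ∀ (K : Type u) [AddCommGroup K] [Module S K] (i : N →ₗ[S] K), Function.Injective i →
    IsPureMono S i

/-- `N` is absolutely `M`-pure, for a right module `M`. -/
def AbsMPure (M : Type u) [AddCommGroup M] [Module Sᵐᵒᵖ M] (N : Type u) [AddCommGroup N]
    [Module S N] : Prop :=
  ∀ (B : Type u) [AddCommGroup B] [Module S B] (i : N →ₗ[S] B), Function.Injective i →
    Function.Injective (rTensorMap S M i)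

/-- `M` is pure-injective: maps into `M` extend along pure monomorphisms. -/
def PureInjective (M : Type u) [AddCommGroup M] [Module S M] : Prop :=
  ∀ (A B : Type u) [AddCommGroup A] [Module S A] [AddCommGroup B] [Module S B]
    (i : A →ₗ[S] B), IsPureMono S i → ∀ f : A →ₗ[S] M, ∃ h : B →ₗ[S] M, h ∘ₗ i = f

/-- `M` is indigent: its subinjectivity domain is exactly the injective modules. -/
def Indigent (M : Type u) [AddCommGroup M] [Module S M] : Prop :=
  ∀ (N : Type u) [AddCommGroup N] [Module S N], Subinjective S N M ↔ InjMod S N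

/-- `M` is pi-indigent: `M` is pure-injective and its subinjectivity domain is exactly
the absolutely pure modules. -/
def PiIndigent (M : Type u) [AddCommGroup M] [Module S M] : Prop :=
  PureInjective S M ∧
    ∀ (N : Type u) [AddCommGroup N] [Module S N], Subinjective S N M ↔ AbsPure S N

/-- Flatness via the equational criterion. -/
def FlatMod (M : Type u) [AddCommGroup M] [Module S M] : Prop :=
  ∀ (n : ℕ) (r : Fin n → S) (x : Fin n → M), (∑ i, r i • x i) = 0 →
    ∃ (m : ℕ) (a : Fin n → Fin m → S) (y : Fin m → M),
      (∀ i, x i = ∑ j, a i j • y j) ∧ ∀ j, (∑ i, r i * a i j) = 0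

/-- Finitely presented module. -/
def FPMod (M : Type u) [AddCommGroup M] [Module S M] : Prop :=
  ∃ (n : ℕ) (K : Submodule S (Fin n → S)), K.FG ∧
    Nonempty ((((Fin n → S)) ⧸ K) ≃ₗ[S] M)

/-- `Ext¹_S(M, N) = 0`, expressed by the splitting of every extension of `N` by `M`. -/
def ExtVanish (M N : Type u) [AddCommGroup M] [Module S M] [AddCommGroup N] [Module S N] :
    Prop :=
  ∀ (B : Type u) [AddCommGroup B] [Module S B] (i : N →ₗ[S] B) (p : B →ₗ[S] M),
    Function.Injective i → Function.Surjective p → LinearMap.range i = LinearMap.ker p →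
      ∃ s : M →ₗ[S] B, p ∘ₗ s = LinearMap.id

/-- `Tor₁^S(N, T) = 0` for a right module `N` and a left module `T`. -/
def TorVanish (N : Type u) [AddCommGroup N] [Module Sᵐᵒᵖ N] (T : Type u) [AddCommGroup T]
    [Module S T] : Prop :=
  ∀ (P K : Type u) [AddCommGroup P] [Module Sᵐᵒᵖ P] [AddCommGroup K] [Module Sᵐᵒᵖ K]
    (i : K →ₗ[Sᵐᵒᵖ] P) (p : P →ₗ[Sᵐᵒᵖ] N), Module.Projective Sᵐᵒᵖ P →
      Function.Injective i → Function.Surjective p →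
        LinearMap.range i = LinearMap.ker p → Function.Injective (lTensorMap S i T)

/-- `M` is a Whitehead test module for injectivity (i-test). -/
def ITest (M : Type u) [AddCommGroup M] [Module S M] : Prop :=
  ∀ (N : Type u) [AddCommGroup N] [Module S N], ExtVanish S M N → InjMod S N

/-- `S` is (left) n-saturated: `S` is not semisimple and every finitely generated
non-projective module is i-test. -/
def NSaturated : Prop :=
  ¬ IsSemisimpleRing S ∧ ∀ (M : Type u) [AddCommGroup M] [Module S M],
    Module.Finite S M → ¬ Module.Projective S M → ITest S M

/-- A submodule is essential if it intersects every nonzero submodule nontrivially. -/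
def EssentialIn {M : Type u} [AddCommGroup M] [Module S M] (A : Submodule S M) : Prop :=
  ∀ B : Submodule S M, B ≠ ⊥ → A ⊓ B ≠ ⊥

/-- `M` is a singular module: every element is annihilated by an essential left ideal. -/
def SingularMod (M : Type u) [AddCommGroup M] [Module S M] : Prop :=
  ∀ x : M, EssentialIn S (LinearMap.ker (LinearMap.toSpanSingleton S M x))

/-- `S` is (left) nonsingular: `Z(S) = 0`. -/
def NonsingularRing : Prop :=
  ∀ r : S, EssentialIn S (LinearMap.ker (LinearMap.toSpanSingleton S S r)) → r = 0

/-- The socle of a module: the supremum of its simple submodules. -/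
def socle (M : Type u) [AddCommGroup M] [Module S M] : Submodule S M :=
  sSup {N : Submodule S M | IsAtom N}

/-- von Neumann regular ring. -/
def IsVNR : Prop := ∀ a : S, ∃ r : S, a * r * a = a

/-- (left) V-ring: every simple module is injective. -/
def VRing : Prop :=
  ∀ (M : Type u) [AddCommGroup M] [Module S M], IsSimpleModule S M → InjMod S M

/-- (left) hereditary: every left ideal is projective. -/
def HereditaryRing : Prop := ∀ I : Submodule S S, Module.Projective S I

/-- (left) semihereditary: every finitely generated left ideal is projective. -/
def SemihereditaryRing : Prop := ∀ I : Submodule S S, I.FG → Module.Projective S I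

/-- (left) SI-ring: every singular module is injective. -/
def SIRing : Prop :=
  ∀ (M : Type u) [AddCommGroup M] [Module S M], SingularMod S M → InjMod S M

/-- quasi-Frobenius ring: two-sided Noetherian and self-injective. -/
def QFRing : Prop :=
  IsNoetherianRing S ∧ IsNoetherianRing Sᵐᵒᵖ ∧ InjMod S S ∧ InjMod Sᵐᵒᵖ S

/-- A module is uniserial if its submodules are totally ordered. -/
def Uniserial (M : Type u) [AddCommGroup M] [Module S M] : Prop :=
  ∀ A B : Submodule S M, A ≤ B ∨ B ≤ A

/-- (left) serial ring: `S` is a finite direct sum of uniserial left ideals. -/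
def SerialRing : Prop :=
  ∃ (n : ℕ) (f : Fin n → Submodule S S), (∀ i, Uniserial S (f i)) ∧
    iSupIndep f ∧ iSup f = ⊤

/-- (left) coherent: every finitely generated left ideal is finitely presented. -/
def CoherentRing : Prop := ∀ I : Submodule S S, I.FG → FPMod S I

/-- Indecomposable ring: no nontrivial central idempotents. -/
def IndecompRing : Prop :=
  Nontrivial S ∧ ∀ e : S, e * e = e → (∀ r : S, e * r = r * e) → e = 0 ∨ e = 1

end Defs
/-! If `x` has a non-essential annihilator, so does the maximal ideal `m = ann M`, and a
maximal ideal `m` missing a nonzero ideal `B` splits off: `1 = a + e` with `a ∈ m`, `e ∈ B` and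
`m e ⊆ m ∩ B = 0`, so `a` acts as an identity on `m`. Baer's criterion then holds for any module
killed by `m`: a map from an ideal `I ≤ m` vanishes since `g r = g (r a) = a • g r = 0`, and for
`I ⊄ m` write `1 = b + u` with `b ∈ m`, `u ∈ I`, so that `g r = r • g u`. -/

section Essential

variable {S : Type u} [Ring S] {M : Type u} [AddCommGroup M] [Module S M]

theorem EssentialIn.mono {A A' : Submodule S M} (hAA' : A ≤ A') (hA : EssentialIn S A) :
    EssentialIn S A' :=
  fun B hB hA'B => hA B hB (eq_bot_iff.mpr (hA'B ▸ inf_le_inf_right B hAA'))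

theorem annihilator_le_ker_toSpanSingleton (x : M) :
    Module.annihilator S M ≤ LinearMap.ker (LinearMap.toSpanSingleton S M x) :=
  fun _ hr => Module.mem_annihilator.mp hr x

end Essential

section Baer

variable {R : Type u} [CommRing R]

theorem Ideal.IsMaximal.exists_mul_eq_self_of_not_essentialIn {m : Ideal R} (hm : m.IsMaximal)
    (hess : ¬ EssentialIn R m) : ∃ a ∈ m, ∀ r ∈ m, r * a = r := by
  simp only [EssentialIn, not_forall, not_not] at hess
  obtain ⟨B, hB, hmB⟩ := hess
  have hBm : ¬ B ≤ m := fun hle => hB (by rwa [inf_eq_right.mpr hle] at hmB)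
  obtain ⟨a, ha, e, he, hae⟩ :=
    Submodule.mem_sup.mp ((hm.out.2 _ (left_lt_sup.mpr hBm)) ▸ Submodule.mem_top (x := (1 : R)))
  refine ⟨a, ha, fun r hr => ?_⟩
  have hre : r * e = 0 := by
    have : r * e ∈ m ⊓ B := ⟨m.mul_mem_right e hr, Ideal.mul_mem_left B r he⟩
    rwa [hmB] at this
  calc r * a = r * (a + e) := by rw [mul_add, hre, add_zero]
    _ = r := by rw [hae, mul_one]

theorem Module.Baer.of_le_annihilator {M : Type u} [AddCommGroup M] [Module R M] {m : Ideal R}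
    (hm : m.IsMaximal) (hann : m ≤ Module.annihilator R M) {a : R} (ha : a ∈ m)
    (hunit : ∀ r ∈ m, r * a = r) : Module.Baer R M := by
  have hkill : ∀ r ∈ m, ∀ y : M, r • y = 0 := fun r hr => Module.mem_annihilator.mp (hann hr)
  intro I g
  by_cases hIm : I ≤ m
  · refine ⟨0, fun r hr => ?_⟩
    have hr_eq : (⟨r, hr⟩ : I) = a • ⟨r, hr⟩ := by
      ext
      exact (mul_comm a r ▸ hunit r (hIm hr)).symm
    rw [LinearMap.zero_apply, hr_eq, map_smul, hkill a ha]
  · obtain ⟨b, hb, u, hu, hbu⟩ :=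
      Submodule.mem_sup.mp ((hm.out.2 _ (left_lt_sup.mpr hIm)) ▸ Submodule.mem_top (x := (1 : R)))
    refine ⟨LinearMap.toSpanSingleton R M (g ⟨u, hu⟩), fun r hr => ?_⟩
    have hr_eq : (⟨r, hr⟩ : I) = r • ⟨u, hu⟩ + b • ⟨r, hr⟩ := by
      ext
      change r = r * u + b * r
      linear_combination (-r) * hbu
    change r • g ⟨u, hu⟩ = g ⟨r, hr⟩
    rw [hr_eq, map_add, map_smul, map_smul, hkill b hb, add_zero]

end Baer

theorem Module.Injective.injMod {S : Type u} [Ring S] {M : Type u} [AddCommGroup M] [Module S M]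
    (hM : Module.Injective S M) : InjMod S M :=
  fun _ _ _ _ _ _ i hi f => (hM.out i hi f).imp fun _ hg => LinearMap.ext hg

theorem stmt_18 {R : Type u} [CommRing R] (M : Type u) [AddCommGroup M]
    [Module R M] (hs : IsSimpleModule R M) (h : ¬ InjMod R M) :
    SingularMod R M := by
  by_contra hsing
  obtain ⟨x, hx⟩ : ∃ x : M, ¬ EssentialIn R (LinearMap.ker (LinearMap.toSpanSingleton R M x)) := by
    simpa [SingularMod] using hsing
  have hmax : (Module.annihilator R M).IsMaximal := hs.annihilator_isMaximal
  obtain ⟨a, ha, hunit⟩ := hmax.exists_mul_eq_self_of_not_essentialIn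
    (mt (EssentialIn.mono (annihilator_le_ker_toSpanSingleton x)) hx)
  exact h (Module.Baer.of_le_annihilator hmax le_rfl ha hunit).injective.injMod
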